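/- arXiv:math/0605685 — 2 statements merged into one kernel-verified Lean document; each statement's English description precedes it below -/
import Mathlib

section
/- For integers n ≥ 2, m ≥ 1 and 0 ≤ k ≤ n−1: Σ_{i=0}^{k} (1/(i+1))·C(n−1,i)·C(mn−2,i)·C(n−1−i, n−1−k) = (1/(k+1))·C(n−1,k)·C(mn+k−1,k). -/
/-!
Write `ℓ = n - 1` and `N = mn - 2`. Trinomial revision turns `C(ℓ,i)·C(ℓ-i,ℓ-k)` into
`C(ℓ,k)·C(k,i)`, and absorption turns `C(N,i)/(i+1)` into `C(N+1,i+1)/(N+1)`. The sum then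
becomes `C(ℓ,k)/(N+1) · Σᵢ C(k,i)·C(N+1,i+1)`, which Vandermonde's identity evaluates to
`C(ℓ,k)·C(N+k+1,k+1)/(N+1) = C(ℓ,k)·C(N+k+1,k)/(k+1)`.
-/

open Finset

namespace Nat

theorem choose_mul_choose_sub_sub {l k i : ℕ} (hik : i ≤ k) (hkl : k ≤ l) :
    l.choose i * (l - i).choose (l - k) = l.choose k * k.choose i := by
  rw [choose_mul hik, choose_symm_of_eq_add (by omega : l - i = (l - k) + (k - i))]

theorem sum_range_choose_mul_choose_succ (M k : ℕ) :
    ∑ i ∈ range (k + 1), k.choose i * M.choose (i + 1) = (M + k).choose (k + 1) := by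
  rw [add_choose_eq, Finset.Nat.sum_antidiagonal_eq_sum_range_succ_mk, succ_eq_add_one,
    sum_range_succ' _ (k + 1)]
  simp only [Nat.sub_zero, choose_succ_self, mul_zero, add_zero, succ_sub_succ]
  refine sum_congr rfl fun i hi => ?_
  rw [mul_comm, choose_symm (mem_range_succ_iff.mp hi)]

end Nat

variable {K : Type*} [Field K] [CharZero K]

theorem one_div_succ_mul_choose (N i : ℕ) :
    1 / (i + 1 : K) * N.choose i = (N + 1).choose (i + 1) / (N + 1) := by
  have h : ((N + 1 : ℕ) : K) * N.choose i = (N + 1).choose (i + 1) * (i + 1 : ℕ) := by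
    exact_mod_cast Nat.add_one_mul_choose_eq N i
  push_cast at h
  field_simp
  linear_combination h

theorem choose_succ_div_succ (M k : ℕ) :
    ((M + k + 1).choose (k + 1) : K) / (M + 1) = 1 / (k + 1 : K) * (M + k + 1).choose k := by
  have h := Nat.choose_succ_right_eq (M + k + 1) k
  rw [show M + k + 1 - k = M + 1 by omega] at h
  have h' : ((M + k + 1).choose (k + 1) : K) * (k + 1) = (M + k + 1).choose k * (M + 1) := by
    exact_mod_cast h
  field_simp
  linear_combination h'

theorem sum_one_div_succ_mul_choose_mul_choose_mul_choose (l N k : ℕ) (hkl : k ≤ l) :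
    ∑ i ∈ range (k + 1),
        1 / (i + 1 : K) * l.choose i * N.choose i * (l - i).choose (l - k)
      = 1 / (k + 1 : K) * l.choose k * (N + k + 1).choose k := by
  have hterm : ∀ i ∈ range (k + 1),
      1 / (i + 1 : K) * l.choose i * N.choose i * (l - i).choose (l - k)
        = l.choose k / (N + 1) * (k.choose i * (N + 1).choose (i + 1) : ℕ) := by
    intro i hi
    have hcomb : (l.choose i * (l - i).choose (l - k) : K) = l.choose k * k.choose i := by
      exact_mod_cast Nat.choose_mul_choose_sub_sub (mem_range_succ_iff.mp hi) hkl
    push_cast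
    linear_combination
      (l.choose i * (l - i).choose (l - k) : K) * one_div_succ_mul_choose (K := K) N i +
        ((N + 1).choose (i + 1) / (N + 1) : K) * hcomb
  rw [sum_congr rfl hterm, ← mul_sum, ← Nat.cast_sum, Nat.sum_range_choose_mul_choose_succ,
    show N + 1 + k = N + k + 1 by ring, mul_comm_div, choose_succ_div_succ]
  ring

/-- The relation `f⁺_{k−1}(A_{n−1}, m) = Σ_{i=0}^{k} h⁺ᵢ(A_{n−1}, m)·C(ℓ−i, ℓ−k)` with
`ℓ = n−1`, where `h⁺ᵢ(A_{n−1},m) = (1/(i+1))·C(n−1,i)·C(mn−2,i)` and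
`f⁺_{k−1}(A_{n−1},m) = (1/(k+1))·C(n−1,k)·C(mn+k−1,k)`. -/
theorem fh_relation_typeA (m n k : ℕ) (hn : 2 ≤ n) (hm : 1 ≤ m) (hk : k ≤ n - 1) :
    ∑ i ∈ Finset.range (k + 1),
        (1 / (i + 1 : ℚ)) * ((n - 1).choose i : ℚ) * ((m * n - 2).choose i : ℚ) *
          ((n - 1 - i).choose (n - 1 - k) : ℚ)
      = (1 / (k + 1 : ℚ)) * ((n - 1).choose k : ℚ) * ((m * n + k - 1).choose k : ℚ) := by
  have hmn : 2 ≤ m * n := hn.trans (Nat.le_mul_of_pos_left n hm)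
  obtain ⟨N, hN⟩ : ∃ N, m * n = N + 2 := ⟨m * n - 2, by omega⟩
  rw [hN, Nat.add_sub_cancel, show N + 2 + k - 1 = N + k + 1 by omega]
  exact sum_one_div_succ_mul_choose_mul_choose_mul_choose (n - 1) N k hk
end

section
/- For the root system D_n (n ≥ 3) and any m ≥ 1, the numbers h⁺ᵢ(D_n, m) = C(n,i)·C(m(n−1)−1, i) + C(n−2, i−2)·C(m(n−1), i) satisfy Σ_{i=0}^{n} h⁺ᵢ(D_n, m) = N⁺(D_n, m) = ∏_{j} (e_j + m(2n−2) − 1)/(e_j + 1), where the exponents of D_n are 1, 3, 5, …, 2n−3, n−1 and h = 2n−2. -/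
/-!
Write `N = m(n−1)`. Two applications of Vandermonde's identity give
`∑ h⁺ᵢ = C(N+n−1, n) + C(N+n−2, n)`, while with the exponents `2j−1` the product becomes
`∏ (N−1+j)/j = C(N+n−2, n−1)`, so `N⁺ = C(N+n−2, n−1)·(2N+n−2)/n`. The two agree by Pascal's
rule together with `n·C(N+n−2, n) = (N−1)·C(N+n−2, n−1)`.
-/

open Finset

namespace Nat

theorem sum_range_choose_mul_choose_add (a N s : ℕ) :
    ∑ j ∈ range (a + 1), a.choose j * N.choose (j + s) = (a + N).choose (a + s) := by
  rw [add_choose_eq, Finset.Nat.sum_antidiagonal_eq_sum_range_succ_mk]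
  calc ∑ j ∈ range (a + 1), a.choose j * N.choose (j + s)
      = ∑ k ∈ range (a + 1), a.choose k * N.choose (a + s - k) := by
        rw [← sum_range_reflect]
        refine sum_congr rfl fun j hj => ?_
        rw [mem_range] at hj
        rw [← choose_symm (by omega : j ≤ a)]
        congr 2
        omega
    _ = _ := sum_subset (range_subset_range.2 (by omega)) fun k _ hk => by
        rw [mem_range, not_lt] at hk
        rw [choose_eq_zero_of_lt (by omega), zero_mul]

theorem sum_range_choose_mul_choose (n M : ℕ) :
    ∑ i ∈ range (n + 1), n.choose i * M.choose i = (M + n).choose n := by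
  simpa [add_comm M] using sum_range_choose_mul_choose_add n M 0

theorem sum_range_ite_choose_sub_two_mul_choose (a N : ℕ) :
    ∑ i ∈ range (a + 3), (if 2 ≤ i then a.choose (i - 2) * N.choose i else 0) =
      (a + N).choose (a + 2) := by
  rw [← sum_range_choose_mul_choose_add, sum_range_succ', sum_range_succ']
  simp [add_assoc]

theorem add_one_mul_choose_add_choose (M k : ℕ) :
    (k + 1) * ((M + k + 1).choose (k + 1) + (M + k).choose (k + 1)) =
      (2 * M + k + 1) * (M + k).choose k := by
  have step := choose_succ_right_eq (M + k) k
  rw [show M + k - k = M by omega] at step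
  rw [choose_succ_succ]
  linear_combination 2 * step

end Nat

theorem prod_Icc_add_div_eq_choose {K : Type*} [Field K] [CharZero K] (b k : ℕ) :
    ∏ j ∈ Icc 1 k, ((b + j : K) / j) = (b + k).choose k := by
  induction k with
  | zero => simp
  | succ k ih =>
    rw [prod_Icc_succ_top (by omega), ih, ← add_assoc]
    have pascal := Nat.add_one_mul_choose_eq (b + k) k
    rw [← Nat.cast_inj (R := K)] at pascal
    push_cast at pascal ⊢
    field_simp
    linear_combination pascal

/-- The refined numbers `h⁺ᵢ(D_n, m) = C(n,i)·C(m(n−1)−1,i) + C(n−2,i−2)·C(m(n−1),i)`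
(with the convention `C(n−2, i−2) = 0` for `i < 2`) sum to the positive Fuss–Catalan
number `N⁺(D_n, m) = ∏_j (e_j + m(2n−2) − 1)/(e_j + 1)`, where the exponents of `D_n`
are `1, 3, 5, …, 2n−3` together with `n−1` and the Coxeter number is `h = 2n−2`. -/
theorem hplus_sum_typeD (m n : ℕ) (hm : 1 ≤ m) (hn : 3 ≤ n) :
    (∑ i ∈ Finset.range (n + 1),
        ((n.choose i : ℚ) * ((m * (n - 1) - 1).choose i : ℚ) +
          if 2 ≤ i then ((n - 2).choose (i - 2) : ℚ) * ((m * (n - 1)).choose i : ℚ)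
          else 0))
      = (∏ j ∈ Finset.Icc 1 (n - 1),
          ((2 * (j : ℚ) - 1) + m * (2 * (n : ℚ) - 2) - 1) / ((2 * (j : ℚ) - 1) + 1)) *
        ((((n : ℚ) - 1) + m * (2 * (n : ℚ) - 2) - 1) / (((n : ℚ) - 1) + 1)) := by
  obtain ⟨a, rfl⟩ : ∃ a, n = a + 2 := ⟨n - 2, by omega⟩
  obtain ⟨M, hM⟩ : ∃ M, m * (a + 1) = M + 1 :=
    Nat.exists_eq_add_one.2 (Nat.mul_pos hm a.succ_pos)
  have hMq : (m : ℚ) * (2 * ((a + 2 : ℕ) : ℚ) - 2) = 2 * (M + 1) := by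
    push_cast
    linear_combination 2 * (by exact_mod_cast hM : (m : ℚ) * (a + 1) = M + 1)
  have vandermonde : ∑ i ∈ range (a + 2 + 1), ((a + 2).choose i : ℚ) * M.choose i =
      (M + (a + 2)).choose (a + 2) := by
    exact_mod_cast Nat.sum_range_choose_mul_choose (a + 2) M
  have vandermonde_shifted : ∑ i ∈ range (a + 2 + 1),
      (if 2 ≤ i then (a.choose (i - 2) : ℚ) * (M + 1).choose i else 0) =
      (a + (M + 1)).choose (a + 2) := by
    exact_mod_cast Nat.sum_range_ite_choose_sub_two_mul_choose a (M + 1)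
  have prod_eq : ∏ j ∈ Icc 1 (a + 1),
      ((2 * (j : ℚ) - 1) + 2 * (M + 1) - 1) / ((2 * (j : ℚ) - 1) + 1) =
      (M + (a + 1)).choose (a + 1) := by
    rw [← prod_Icc_add_div_eq_choose]
    refine prod_congr rfl fun j _ => ?_
    rw [← mul_div_mul_left _ _ (two_ne_zero : (2 : ℚ) ≠ 0)]
    ring_nf
  have key : ((a + 2 : ℕ) : ℚ) *
      ((M + (a + 2)).choose (a + 2) + (M + (a + 1)).choose (a + 2)) =
      (2 * M + a + 2) * (M + (a + 1)).choose (a + 1) := by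
    exact_mod_cast Nat.add_one_mul_choose_add_choose M (a + 1)
  rw [show a + 2 - 1 = a + 1 from rfl, show a + 2 - 2 = a from rfl, hM, Nat.add_sub_cancel, hMq,
    sum_add_distrib, vandermonde, vandermonde_shifted, prod_eq,
    show a + (M + 1) = M + (a + 1) by omega]
  push_cast at key ⊢
  rw [mul_div_assoc', eq_div_iff (by ring_nf; positivity)]
  linear_combination key
end
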